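/- Let 1 ≥ p_1 ≥ ... ≥ p_D ≥ 0 with p_{d+1} < 1, 1 < d < D, and ζ ≥ 0 with p_d + ζ ≤ 1. Then the difference ΔE between the concentrated and original expected lengths satisfies ΔE ≥ A·[1 − (p_d − p_{d+1} + ζ)·(1 − p_{d+1}^{D−d})/(1 − p_{d+1})], where A = ζ·Π_{i=1}^{d−1} p_i, and this lower bound is nonnegative. -/

import Mathlib

/-!
Only the prefix products with `k ≥ d` change. The `k = d` term gains `ζ A`, and for `k > d` the
factor `p_d p_{d+1}` becomes `(p_d + ζ)(p_{d+1} - ζ) = p_d p_{d+1} - ζ c` with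
`c = p_d - p_{d+1} + ζ`, so exactly `ΔE = ζ A (1 - c T)` where `T = ∑_{k>d} ∏_{i=d+2}^k p_i`.
Monotonicity bounds `T` by the geometric sum `∑_{j<D-d} p_{d+1}^j`, and `c ≤ 1 - p_{d+1}` makes
`c` times that sum at most `1 - p_{d+1}^{D-d} ≤ 1`.
-/

open Finset

@[to_additive]
theorem prod_Icc_succ_consecutive {M : Type*} [CommMonoid M] (f : ℕ → M) {m n k : ℕ}
    (hmn : m ≤ n) (hnk : n ≤ k) :
    (∏ i ∈ Icc (m + 1) n, f i) * ∏ i ∈ Icc (n + 1) k, f i = ∏ i ∈ Icc (m + 1) k, f i := by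
  simp only [Icc_add_one_left_eq_Ioc]
  exact prod_Ioc_consecutive f hmn hnk

section Concentration

variable {R : Type*} [CommRing R]

def expectedLength (p : ℕ → R) (D : ℕ) : R :=
  ∑ k ∈ Icc 1 D, ∏ i ∈ Icc 1 k, p i

/-- The sequence `p'` of the paper. -/
def concentrate (p : ℕ → R) (d : ℕ) (ζ : R) : ℕ → R :=
  fun i => if i = d then p d + ζ else if i = d + 1 then p (d + 1) - ζ else p i

theorem concentrate_of_ne {p : ℕ → R} {d i : ℕ} (ζ : R) (hi : i ≠ d) (hi1 : i ≠ d + 1) :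
    concentrate p d ζ i = p i := by
  simp [concentrate, hi, hi1]

theorem prod_concentrate_of_lt (p : ℕ → R) (ζ : R) {d k : ℕ} (hk : k < d) :
    ∏ i ∈ Icc 1 k, concentrate p d ζ i = ∏ i ∈ Icc 1 k, p i :=
  prod_congr rfl fun i hi => by
    rw [mem_Icc] at hi
    exact concentrate_of_ne ζ (by omega) (by omega)

theorem prod_Icc_concentrate_tail (p : ℕ → R) (ζ : R) (d k : ℕ) :
    ∏ i ∈ Icc (d + 2) k, concentrate p d ζ i = ∏ i ∈ Icc (d + 2) k, p i :=
  prod_congr rfl fun i hi => by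
    rw [mem_Icc] at hi
    exact concentrate_of_ne ζ (by omega) (by omega)

theorem prod_concentrate_sub_prod_self (p : ℕ → R) (ζ : R) {d : ℕ} (hd : 1 ≤ d) :
    ∏ i ∈ Icc 1 d, concentrate p d ζ i - ∏ i ∈ Icc 1 d, p i = ζ * ∏ i ∈ Icc 1 (d - 1), p i := by
  obtain ⟨m, rfl⟩ : ∃ m, d = m + 1 := ⟨d - 1, by omega⟩
  rw [prod_Icc_succ_top (by omega), prod_Icc_succ_top (by omega),
    prod_concentrate_of_lt p ζ (Nat.lt_succ_self m), Nat.add_sub_cancel]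
  simp only [concentrate, if_pos]
  ring

theorem prod_concentrate_sub_prod_of_lt (p : ℕ → R) (ζ : R) {d k : ℕ} (hd : 1 ≤ d) (hk : d < k) :
    ∏ i ∈ Icc 1 k, concentrate p d ζ i - ∏ i ∈ Icc 1 k, p i =
      -(ζ * (∏ i ∈ Icc 1 (d - 1), p i) * (p d - p (d + 1) + ζ) * ∏ i ∈ Icc (d + 2) k, p i) := by
  have split (f : ℕ → R) : ∏ i ∈ Icc 1 k, f i =
      (∏ i ∈ Icc 1 (d - 1), f i) * f d * f (d + 1) * ∏ i ∈ Icc (d + 2) k, f i := by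
    obtain ⟨m, rfl⟩ : ∃ m, d = m + 1 := ⟨d - 1, by omega⟩
    rw [← prod_Icc_succ_consecutive f (Nat.zero_le (m + 2)) hk,
      prod_Icc_succ_top (by omega), prod_Icc_succ_top (by omega), Nat.add_sub_cancel]
  rw [split, split, prod_concentrate_of_lt p ζ (by omega : d - 1 < d),
    prod_Icc_concentrate_tail p ζ d k]
  simp only [concentrate, if_pos, if_neg (by omega : d + 1 ≠ d)]
  ring

theorem expectedLength_concentrate_sub (p : ℕ → R) (ζ : R) {d D : ℕ} (hd : 1 ≤ d) (hdD : d ≤ D) :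
    expectedLength (concentrate p d ζ) D - expectedLength p D =
      ζ * (∏ i ∈ Icc 1 (d - 1), p i) *
        (1 - (p d - p (d + 1) + ζ) * ∑ k ∈ Icc (d + 1) D, ∏ i ∈ Icc (d + 2) k, p i) := by
  obtain ⟨m, rfl⟩ : ∃ m, d = m + 1 := ⟨d - 1, by omega⟩
  have head : ∑ k ∈ Icc 1 m, (∏ i ∈ Icc 1 k, concentrate p (m + 1) ζ i - ∏ i ∈ Icc 1 k, p i) = 0 :=
    sum_eq_zero fun k hk => by
      rw [prod_concentrate_of_lt p ζ (Nat.lt_succ_of_le (mem_Icc.1 hk).2), sub_self]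
  rw [expectedLength, expectedLength, ← sum_sub_distrib,
    ← sum_Icc_succ_consecutive _ (Nat.zero_le (m + 1)) hdD, sum_Icc_succ_top (by omega), head,
    prod_concentrate_sub_prod_self p ζ hd,
    sum_congr rfl fun k hk => prod_concentrate_sub_prod_of_lt p ζ hd (mem_Icc.1 hk).1,
    sum_neg_distrib, ← mul_sum]
  ring

end Concentration

theorem sum_prod_Icc_le_geom_sum {p : ℕ → ℝ} {x : ℝ} {a D : ℕ}
    (hp0 : ∀ i ∈ Icc (a + 1) D, 0 ≤ p i) (hpx : ∀ i ∈ Icc (a + 1) D, p i ≤ x) :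
    ∑ k ∈ Icc a D, ∏ i ∈ Icc (a + 1) k, p i ≤ ∑ j ∈ range (D + 1 - a), x ^ j := by
  rw [← Ico_add_one_right_eq_Icc, sum_Ico_eq_sum_range]
  refine sum_le_sum fun j hj => ?_
  have hsub : Icc (a + 1) (a + j) ⊆ Icc (a + 1) D := by
    rw [mem_range] at hj
    exact Icc_subset_Icc_right (by omega)
  calc ∏ i ∈ Icc (a + 1) (a + j), p i ≤ ∏ _i ∈ Icc (a + 1) (a + j), x :=
        prod_le_prod (fun i hi => hp0 i (hsub hi)) fun i hi => hpx i (hsub hi)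
    _ = x ^ j := by simp

theorem mul_geom_sum_le_one {x c : ℝ} (hx : 0 ≤ x) (hc : c ≤ 1 - x) (n : ℕ) :
    c * ∑ j ∈ range n, x ^ j ≤ 1 :=
  calc c * ∑ j ∈ range n, x ^ j ≤ (1 - x) * ∑ j ∈ range n, x ^ j :=
        mul_le_mul_of_nonneg_right hc (sum_nonneg fun j _ => pow_nonneg hx j)
    _ = 1 - x ^ n := mul_neg_geom_sum x n
    _ ≤ 1 := sub_le_self 1 (pow_nonneg hx n)

theorem stmt3_general (D d : ℕ) (hd : 1 < d) (hdD : d < D) (p : ℕ → ℝ) (ζ : ℝ)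
    (hpD : 0 ≤ p D)
    (hmono : ∀ i, 1 ≤ i → i < D → p (i + 1) ≤ p i)
    (hpd1 : p (d + 1) < 1)
    (hζ : 0 ≤ ζ) (hζd : p d + ζ ≤ 1) :
    (ζ * ∏ i ∈ Finset.Icc 1 (d - 1), p i) *
        (1 - (p d - p (d + 1) + ζ) * ((1 - p (d + 1) ^ (D - d)) / (1 - p (d + 1))))
      ≤ (∑ k ∈ Finset.Icc 1 D, ∏ i ∈ Finset.Icc 1 k,
          (if i = d then p d + ζ else if i = d + 1 then p (d + 1) - ζ else p i))
        - ∑ k ∈ Finset.Icc 1 D, ∏ i ∈ Finset.Icc 1 k, p i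
    ∧ 0 ≤ (ζ * ∏ i ∈ Finset.Icc 1 (d - 1), p i) *
        (1 - (p d - p (d + 1) + ζ) * ((1 - p (d + 1) ^ (D - d)) / (1 - p (d + 1)))) := by
  have hanti : AntitoneOn p (Set.Icc 1 D) :=
    antitoneOn_of_add_one_le Set.ordConnected_Icc fun i _ hi hi1 => hmono i hi.1 hi1.2
  have hp0 : ∀ i ∈ Icc 1 D, 0 ≤ p i := fun i hi =>
    hpD.trans (hanti (mem_Icc.1 hi) ⟨by omega, le_rfl⟩ (mem_Icc.1 hi).2)
  have hA : 0 ≤ ζ * ∏ i ∈ Icc 1 (d - 1), p i :=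
    mul_nonneg hζ (prod_nonneg fun i hi => hp0 i (Icc_subset_Icc_right (by omega) hi))
  have hc : 0 ≤ p d - p (d + 1) + ζ := by linarith [hmono d (by omega) hdD]
  have hT := sum_prod_Icc_le_geom_sum (a := d + 1) (x := p (d + 1))
    (fun i hi => hp0 i (Icc_subset_Icc_left (by omega) hi))
    fun i hi => by
      rw [mem_Icc] at hi
      exact hanti ⟨by omega, by omega⟩ ⟨by omega, hi.2⟩ (by omega)
  rw [Nat.add_sub_add_right] at hT
  have hcS : (p d - p (d + 1) + ζ) * ∑ j ∈ range (D - d), p (d + 1) ^ j ≤ 1 :=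
    mul_geom_sum_le_one (hp0 (d + 1) (mem_Icc.2 ⟨by omega, by omega⟩)) (by linarith) (D - d)
  have hgeom :
      (1 - p (d + 1) ^ (D - d)) / (1 - p (d + 1)) = ∑ j ∈ range (D - d), p (d + 1) ^ j := by
    rw [← mul_neg_geom_sum, mul_div_cancel_left₀ _ (sub_ne_zero.2 hpd1.ne')]
  rw [hgeom]
  change _ ≤ expectedLength (concentrate p d ζ) D - expectedLength p D ∧ _
  rw [expectedLength_concentrate_sub p ζ hd.le hdD.le]
  exact ⟨by gcongr, mul_nonneg hA (by linarith)⟩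

/-- Lower bound for the difference `ΔE` between the concentrated and original expected
lengths: `ΔE ≥ A·[1 − (p_d − p_{d+1} + ζ)·(1 − p_{d+1}^{D−d})/(1 − p_{d+1})]` with
`A = ζ·∏_{i=1}^{d−1} p i`, and this lower bound is nonnegative. -/
theorem stmt3 (D d : ℕ) (hd : 1 < d) (hdD : d < D) (p : ℕ → ℝ) (ζ : ℝ)
    (hp1 : p 1 ≤ 1) (hpD : 0 ≤ p D)
    (hmono : ∀ i, 1 ≤ i → i < D → p (i + 1) ≤ p i)
    (hpd1 : p (d + 1) < 1)
    (hζ : 0 ≤ ζ) (hζd : p d + ζ ≤ 1) :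
    (ζ * ∏ i ∈ Finset.Icc 1 (d - 1), p i) *
        (1 - (p d - p (d + 1) + ζ) * ((1 - p (d + 1) ^ (D - d)) / (1 - p (d + 1))))
      ≤ (∑ k ∈ Finset.Icc 1 D, ∏ i ∈ Finset.Icc 1 k,
          (if i = d then p d + ζ else if i = d + 1 then p (d + 1) - ζ else p i))
        - ∑ k ∈ Finset.Icc 1 D, ∏ i ∈ Finset.Icc 1 k, p i
    ∧ 0 ≤ (ζ * ∏ i ∈ Finset.Icc 1 (d - 1), p i) *
        (1 - (p d - p (d + 1) + ζ) * ((1 - p (d + 1) ^ (D - d)) / (1 - p (d + 1)))) :=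
  stmt3_general D d hd hdD p ζ hpD hmono hpd1 hζ hζd
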